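/- arXiv:1008.2878 — 4 statements merged into one kernel-verified Lean document; each statement's English description precedes it below -/
import Mathlib

section
/- Let H be a Hilbert space, S, S_k bounded operators with ‖S_k‖ ≤ 1, S_k → S in the weak operator topology, and x ∈ H. Suppose N ∈ ℕ and ‖S^(l+1) x‖ = ‖S^l x‖ for all l < N. Then ‖S_k^N x − S^N x‖ → 0 as k → ∞. -/
/-!
In a Hilbert space, weak convergence `u k ⇀ v` together with `‖u k‖ ≤ ‖v‖` gives norm
convergence. Since `‖S_k‖ ≤ 1` and `‖S (S^l x)‖ = ‖S^l x‖`, this applies to `u k = S_k (S^l x)`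
for every `l < N`, so `S_k → S` strongly at each point `S^l x` of the orbit. Strong convergence
then propagates through powers by the uniform bound on `‖S_k‖`:
`S_k^{l+1} x - S^{l+1} x = S_k (S_k^l x - S^l x) + (S_k - S)(S^l x)`.
-/

open Filter Topology

-- `‖u k - v‖² ≤ 2 ‖v‖² - 2 re ⟪u k, v⟫ → 0`
theorem tendsto_of_tendsto_inner_of_norm_le {𝕜 E ι : Type*} [RCLike 𝕜] [NormedAddCommGroup E]
    [InnerProductSpace 𝕜 E] {l : Filter ι} {u : ι → E} {v : E}
    (hinner : Tendsto (fun k => inner 𝕜 (u k) v) l (𝓝 (inner 𝕜 v v)))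
    (hle : ∀ k, ‖u k‖ ≤ ‖v‖) : Tendsto u l (𝓝 v) := by
  have hre : Tendsto (fun k => 2 * ‖v‖ ^ 2 - 2 * RCLike.re (inner 𝕜 (u k) v)) l (𝓝 0) := by
    have := ((RCLike.continuous_re.tendsto _).comp hinner).const_mul 2 |>.const_sub (2 * ‖v‖ ^ 2)
    simpa [Function.comp_def, inner_self_eq_norm_sq] using this
  have hsq : Tendsto (fun k => ‖u k - v‖ ^ 2) l (𝓝 0) := by
    refine squeeze_zero (fun k => by positivity) (fun k => ?_) hre
    rw [@norm_sub_sq 𝕜]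
    nlinarith [hle k, norm_nonneg (u k)]
  rw [tendsto_iff_norm_sub_tendsto_zero]
  simpa using hsq.sqrt

theorem tendsto_pow_apply_of_tendsto_apply_orbit {𝕜 E ι : Type*} [NontriviallyNormedField 𝕜]
    [SeminormedAddCommGroup E] [NormedSpace 𝕜 E] {l : Filter ι} {T : ι → E →L[𝕜] E}
    {S : E →L[𝕜] E} {C : ℝ} (hT : ∀ k, ‖T k‖ ≤ C) {x : E} {N : ℕ}
    (horbit : ∀ n < N, Tendsto (fun k => T k ((S ^ n) x)) l (𝓝 (S ((S ^ n) x)))) :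
    Tendsto (fun k => (T k ^ N) x) l (𝓝 ((S ^ N) x)) := by
  induction N with
  | zero => simpa using tendsto_const_nhds
  | succ n ih =>
    have hprev := tendsto_iff_norm_sub_tendsto_zero.1 (ih fun m hm => horbit m (by omega))
    have herror : Tendsto (fun k => T k ((T k ^ n) x - (S ^ n) x)) l (𝓝 0) :=
      squeeze_zero_norm (fun k => (T k).le_of_opNorm_le (hT k) _)
        (by simpa using hprev.const_mul C)
    simpa [pow_succ'] using herror.add (horbit n n.lt_succ_self)

theorem stmt2_general {H : Type*} [NormedAddCommGroup H] [InnerProductSpace ℂ H]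
    (S : H →L[ℂ] H) (Sk : ℕ → H →L[ℂ] H) (hSk : ∀ k, ‖Sk k‖ ≤ 1)
    (hconv : ∀ x y : H, Filter.Tendsto (fun k => (inner ℂ ((Sk k) x) y : ℂ))
      Filter.atTop (nhds (inner ℂ (S x) y)))
    (x : H) (N : ℕ) (hnorm : ∀ l < N, ‖(S ^ (l + 1)) x‖ = ‖(S ^ l) x‖) :
    Filter.Tendsto (fun k => ‖(Sk k ^ N) x - (S ^ N) x‖) Filter.atTop (nhds 0) := by
  refine tendsto_iff_norm_sub_tendsto_zero.1 <|
    tendsto_pow_apply_of_tendsto_apply_orbit hSk fun l hl => ?_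
  refine tendsto_of_tendsto_inner_of_norm_le (hconv _ _) fun k => ?_
  calc ‖Sk k ((S ^ l) x)‖ ≤ 1 * ‖(S ^ l) x‖ := (Sk k).le_of_opNorm_le (hSk k) _
    _ = ‖S ((S ^ l) x)‖ := by rw [one_mul, ← hnorm l hl, pow_succ', mul_apply_eq_comp]

/-- If contractions `S_k` converge weakly (WOT) to `S` and the norms are preserved along the
first `N` steps of the orbit of `x` under `S`, then `S_k^N x → S^N x` in norm. -/
theorem stmt2 {H : Type*} [NormedAddCommGroup H] [InnerProductSpace ℂ H] [CompleteSpace H]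
    (S : H →L[ℂ] H) (Sk : ℕ → H →L[ℂ] H) (hSk : ∀ k, ‖Sk k‖ ≤ 1)
    (hconv : ∀ x y : H, Filter.Tendsto (fun k => (inner ℂ ((Sk k) x) y : ℂ))
      Filter.atTop (nhds (inner ℂ (S x) y)))
    (x : H) (N : ℕ) (hnorm : ∀ l < N, ‖(S ^ (l + 1)) x‖ = ‖(S ^ l) x‖) :
    Filter.Tendsto (fun k => ‖(Sk k ^ N) x - (S ^ N) x‖) Filter.atTop (nhds 0) :=
  stmt2_general S Sk hSk hconv x N hnorm
end

section
/- Let X be an infinite-dimensional Banach space, T a contraction on X (‖T‖ ≤ 1), x ∈ X nonzero, and ε > 0. Then there exists a contraction S on X with ‖T − S‖ < ε such that the orbit vectors x, Sx, S²x, … are linearly independent. -/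
/-!
Take `S = A + t B` with `A = (1 - δ) T` and `t > 0` small, where `B` is an auxiliary operator for
which `x, Bx, B²x, …` are linearly independent. Such a `B` is a norm-convergent series of rank-one
operators `∑ c_k f_k(·) e_{k+1}` built from a triangular system `f_n(e_n) = 1`, `f_n(e_m) = 0` for
`m < n`, with `e_0 = x`; this is where infinite dimension is needed. For finitely many exponents
`j`, pair the vectors `(B + sA)^j x` with functionals dual to the `B^j x`: the determinant of the
resulting matrix is a polynomial in `s` equal to `1` at `s = 0`, so it has finitely many roots.
Hence only countably many `t` make the orbit of `A + tB = t (B + t⁻¹ A)` dependent.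
-/

open Polynomial

section CommRing

variable {R M : Type*} [CommRing R] [AddCommGroup M] [Module R M]

theorem Module.End.exists_polynomial_eval_eq_apply_pow_add_smul (L : M →ₗ[R] R)
    (A B : Module.End R M) (n : ℕ) (x : M) :
    ∃ q : R[X], ∀ s : R, q.eval s = L (((B + s • A) ^ n) x) := by
  induction n generalizing x with
  | zero => exact ⟨C (L x), by simp⟩
  | succ n ih =>
    obtain ⟨q₁, hq₁⟩ := ih (B x)
    obtain ⟨q₂, hq₂⟩ := ih (A x)
    refine ⟨q₁ + X * q₂, fun s => ?_⟩
    simp [pow_succ, hq₁, hq₂]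

theorem linearIndependent_of_dual_apply_eq_zero_of_lt [NoZeroDivisors R] {ι : Type*}
    [LinearOrder ι] {v : ι → M} (f : ι → Module.Dual R M)
    (h0 : ∀ i j, j < i → f i (v j) = 0) (h1 : ∀ i, f i (v i) ≠ 0) :
    LinearIndependent R v := by
  classical
  refine linearIndependent_iff'.2 fun s g hg i hi => ?_
  by_contra hgi
  set t := s.filter (g · ≠ 0)
  have ht : t.Nonempty := ⟨i, by simp [t, hi, hgi]⟩
  set m := t.max' ht
  obtain ⟨hm, hgm⟩ := Finset.mem_filter.1 (t.max'_mem ht)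
  have hfm := congr_arg (f m) hg
  rw [map_sum, map_zero, Finset.sum_eq_single m] at hfm
  · exact mul_ne_zero hgm (h1 m) (by simpa using hfm)
  · intro j hj hjm
    by_cases hgj : g j = 0
    · simp [hgj]
    · have hjt : j ∈ t := by simp [t, hj, hgj]
      rw [map_smul, h0 m j ((t.le_max' j hjt).lt_of_ne hjm), smul_zero]
  · exact fun h => (h hm).elim

end CommRing

section Field

variable {K M : Type*} [Field K] [AddCommGroup M] [Module K M]

theorem LinearIndependent.exists_linearMap_apply_eq_single {ι : Type*} [Fintype ι]
    [DecidableEq ι] {v : ι → M} (hv : LinearIndependent K v) :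
    ∃ Φ : M →ₗ[K] ι → K, ∀ j, Φ (v j) = Pi.single j 1 := by
  obtain ⟨Φ, hΦ⟩ := LinearMap.exists_extend (Module.Basis.span hv).equivFun.toLinearMap
  refine ⟨Φ, fun j => ?_⟩
  have := congr($hΦ (Module.Basis.span hv j))
  simpa [Finsupp.single_eq_pi_single] using this

theorem finite_setOf_not_linearIndependent_pow_add_smul {ι : Type*} [Fintype ι] (p : ι → ℕ)
    (A B : Module.End K M) (x : M) (hB : LinearIndependent K fun i => (B ^ p i) x) :
    {s : K | ¬ LinearIndependent K fun i => ((B + s • A) ^ p i) x}.Finite := by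
  classical
  obtain ⟨Φ, hΦ⟩ := hB.exists_linearMap_apply_eq_single
  choose q hq using fun i j =>
    Module.End.exists_polynomial_eval_eq_apply_pow_add_smul (LinearMap.proj i ∘ₗ Φ) A B (p j) x
  set N : K → Matrix ι ι K := fun s => Matrix.of fun i j => Φ (((B + s • A) ^ p j) x) i
  have heval : ∀ s, (Matrix.of q).det.eval s = (N s).det := by
    intro s
    rw [← coe_evalRingHom, RingHom.map_det]
    congr 1
    ext i j
    simp [N, hq]
  have hdet : (Matrix.of q).det ≠ 0 := by
    intro h
    have hN0 : N 0 = 1 := by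
      ext i j
      simp [N, hΦ, Matrix.one_apply, Pi.single_apply]
    simpa [h, hN0] using heval 0
  refine (Polynomial.finite_setOfPred_isRoot hdet).subset fun s hs => ?_
  by_contra hroot
  exact hs (LinearIndependent.of_comp Φ
    (Matrix.linearIndependent_cols_of_det_ne_zero (A := N s) (by rwa [← heval])))

theorem countable_setOf_not_linearIndependent_pow_add_smul (A B : Module.End K M) (x : M)
    (hB : LinearIndependent K fun n => (B ^ n) x) :
    {t : K | ¬ LinearIndependent K fun n => ((A + t • B) ^ n) x}.Countable := by
  have hpencil : {s : K | ¬ LinearIndependent K fun n => ((B + s • A) ^ n) x}.Countable := by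
    refine (Set.countable_iUnion fun t : Finset ℕ =>
      (finite_setOf_not_linearIndependent_pow_add_smul (fun i : t => (i : ℕ)) A B x
        (hB.comp _ Subtype.val_injective)).countable).mono fun s hs => ?_
    rw [Set.mem_ofPred_eq, linearIndependent_iff_finset_linearIndependent] at hs
    push Not at hs
    exact Set.mem_iUnion.2 hs
  refine ((hpencil.preimage inv_injective).insert 0).mono fun t ht => ?_
  rcases eq_or_ne t 0 with rfl | ht0
  · exact Set.mem_insert _ _
  refine Set.mem_insert_of_mem _ fun hind => ht ?_
  have hscale : (fun n => ((A + t • B) ^ n) x) =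
      (fun n => Units.mk0 t ht0 ^ n) • fun n => ((B + t⁻¹ • A) ^ n) x := by
    have hAB : A + t • B = t • (B + t⁻¹ • A) := by
      rw [smul_add, smul_smul, mul_inv_cancel₀ ht0, one_smul, add_comm]
    ext n
    rw [hAB, _root_.smul_pow, LinearMap.smul_apply, Pi.smul_apply', Units.smul_def,
      Units.val_pow_eq_pow_val, Units.val_mk0]
  rw [hscale, LinearIndependent.units_smul_iff]
  exact hind

end Field

section Normed

variable {𝕜 E : Type*} [RCLike 𝕜] [NormedAddCommGroup E] [NormedSpace 𝕜 E]

theorem Submodule.exists_strongDual_eq_one_of_notMem (U : Submodule 𝕜 E)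
    [FiniteDimensional 𝕜 U] {y : E} (hy : y ∉ U) :
    ∃ f : StrongDual 𝕜 E, f y = 1 ∧ ∀ u ∈ U, f u = 0 := by
  have : IsClosed (U : Set E) := U.closed_of_finiteDimensional
  have hy' : ‖U.mkQ y‖ ≠ 0 := by simpa [Submodule.Quotient.mk_eq_zero] using hy
  obtain ⟨g, -, hg⟩ := exists_dual_vector 𝕜 (U.mkQ y) hy'
  refine ⟨(‖U.mkQ y‖ : 𝕜)⁻¹ • g ∘L U.mkQL, ?_, fun u hu => ?_⟩
  · rw [smul_apply, ContinuousLinearMap.comp_apply, Submodule.mkQL_apply, hg,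
      smul_eq_mul, inv_mul_cancel₀ (RCLike.ofReal_ne_zero.2 hy')]
  · simp [(Submodule.Quotient.mk_eq_zero U).2 hu]

theorem exists_seq_strongDual_apply_eq_zero_of_lt (hE : ¬ FiniteDimensional 𝕜 E) {x : E}
    (hx : x ≠ 0) : ∃ (e : ℕ → E) (f : ℕ → StrongDual 𝕜 E), e 0 = x ∧ (∀ n, f n (e n) = 1) ∧
      ∀ m n, m < n → f n (e m) = 0 := by
  have hnotMem : ∀ s : Set E, s.Finite → ∃ y, y ∉ Submodule.span 𝕜 s := by
    intro s hs
    by_contra! h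
    exact hE (Module.finite_def.2 ⟨hs.toFinset, Submodule.eq_top_iff'.2 (by simpa using h)⟩)
  obtain ⟨f₀, hf₀, -⟩ := (⊥ : Submodule 𝕜 E).exists_strongDual_eq_one_of_notMem
    (Submodule.mem_bot 𝕜 |>.not.2 hx)
  obtain ⟨g, hgP, hgr⟩ := exists_seq_of_forall_finset_exists (α := E × StrongDual 𝕜 E)
    (fun p => p.2 p.1 = 1 ∧ p.2 x = 0) (fun p q => q.2 p.1 = 0) fun s _ => by
      have hfin : (insert x (Prod.fst '' (s : Set (E × StrongDual 𝕜 E)))).Finite :=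
        (s.finite_toSet.image _).insert x
      obtain ⟨y, hy⟩ := hnotMem _ hfin
      have := FiniteDimensional.span_of_finite 𝕜 hfin
      obtain ⟨f, hfy, hfU⟩ := Submodule.exists_strongDual_eq_one_of_notMem _ hy
      exact ⟨(y, f), ⟨hfy, hfU _ (Submodule.subset_span (Set.mem_insert _ _))⟩,
        fun p hp => hfU _ (Submodule.subset_span (Set.mem_insert_of_mem _ ⟨p, hp, rfl⟩))⟩
  refine ⟨fun | 0 => x | n + 1 => (g n).1, fun | 0 => f₀ | n + 1 => (g n).2, rfl, ?_, ?_⟩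
  · rintro (_ | n)
    exacts [hf₀, (hgP n).1]
  · rintro (_ | m) (_ | n) h
    · omega
    · exact (hgP n).2
    · omega
    · exact hgr m n (by omega)

variable (𝕜) in
theorem exists_ne_zero_summable_smul {F : Type*} [NormedAddCommGroup F] [NormedSpace 𝕜 F]
    [CompleteSpace F] (b : ℕ → F) :
    ∃ c : ℕ → 𝕜, (∀ k, c k ≠ 0) ∧ Summable fun k => c k • b k := by
  refine ⟨fun k => ((2 ^ k * (‖b k‖ + 1))⁻¹ : ℝ),
    fun k => RCLike.ofReal_ne_zero.2 (by positivity),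
    Summable.of_norm_bounded summable_geometric_two fun k => ?_⟩
  rw [norm_smul, RCLike.norm_ofReal, abs_of_pos (by positivity), mul_inv, one_div, inv_pow]
  calc (2 ^ k)⁻¹ * (‖b k‖ + 1)⁻¹ * ‖b k‖ ≤ (2 ^ k)⁻¹ * 1 := by
        rw [mul_assoc]
        gcongr
        rw [inv_mul_le_iff₀ (by positivity)]
        linarith
    _ = (2 ^ k)⁻¹ := mul_one _

theorem exists_linearIndependent_pow_apply [CompleteSpace E] (hE : ¬ FiniteDimensional 𝕜 E)
    {x : E} (hx : x ≠ 0) : ∃ B : E →L[𝕜] E, LinearIndependent 𝕜 fun n => (B ^ n) x := by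
  obtain ⟨e, f, he0, hfe, hfe0⟩ := exists_seq_strongDual_apply_eq_zero_of_lt hE hx
  obtain ⟨c, hc, hsum⟩ := exists_ne_zero_summable_smul 𝕜 fun k => (f k).smulRight (e (k + 1))
  set B := ∑' k, c k • (f k).smulRight (e (k + 1))
  have hfB : ∀ i w, f i (B w) = ∑' k, c k * f k w * f i (e (k + 1)) := by
    intro i w
    simpa [mul_assoc] using ((f i).comp (ContinuousLinearMap.apply 𝕜 E w)).map_tsum hsum
  have htri : ∀ j, (∀ i, j < i → f i ((B ^ j) x) = 0) ∧ f j ((B ^ j) x) ≠ 0 := by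
    intro j
    induction j with
    | zero => simpa [← he0, hfe] using hfe0 0
    | succ j ih =>
      have hterm : ∀ i k, j < i → k ≠ j → c k * f k ((B ^ j) x) * f i (e (k + 1)) = 0 := by
        intro i k hi hk
        rcases hk.lt_or_gt with hk | hk
        · rw [hfe0 (k + 1) i (by omega), mul_zero]
        · rw [ih.1 k hk, mul_zero, zero_mul]
      rw [pow_succ', mul_apply_eq_comp]
      refine ⟨fun i hi => ?_, ?_⟩
      · rw [hfB, tsum_eq_single j fun k hk => hterm i k (by omega) hk, hfe0 _ _ hi, mul_zero]
      · rw [hfB, tsum_eq_single j fun k hk => hterm _ k (by omega) hk, hfe, mul_one]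
        exact mul_ne_zero (hc j) ih.2
  exact ⟨B, linearIndependent_of_dual_apply_eq_zero_of_lt (fun i => (f i : E →ₗ[𝕜] 𝕜))
    (fun i j hji => (htri j).1 i hji) fun j => (htri j).2⟩

theorem norm_ofReal_one_sub_smul_add_le_one {F : Type*} [NormedAddCommGroup F]
    [NormedSpace 𝕜 F] {T P : F} {δ : ℝ} (hT : ‖T‖ ≤ 1) (hδ0 : 0 ≤ δ) (hδ1 : δ ≤ 1)
    (hP : ‖P‖ ≤ δ) :
    ‖((1 - δ : ℝ) : 𝕜) • T + P‖ ≤ 1 ∧ ‖T - (((1 - δ : ℝ) : 𝕜) • T + P)‖ ≤ 2 * δ := by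
  have hT' : ‖((1 - δ : ℝ) : 𝕜) • T‖ ≤ 1 - δ := by
    rw [norm_smul, RCLike.norm_ofReal, abs_of_nonneg (by linarith)]
    nlinarith [norm_nonneg T]
  have hδT : ‖((δ : ℝ) : 𝕜) • T‖ ≤ δ := by
    rw [norm_smul, RCLike.norm_ofReal, abs_of_nonneg hδ0]
    nlinarith [norm_nonneg T]
  have hsub : T - (((1 - δ : ℝ) : 𝕜) • T + P) = ((δ : ℝ) : 𝕜) • T - P := by
    simp only [RCLike.ofReal_sub, RCLike.ofReal_one, sub_smul, one_smul]
    abel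
  refine ⟨by linarith [norm_add_le (((1 - δ : ℝ) : 𝕜) • T) P], ?_⟩
  rw [hsub]
  linarith [norm_sub_le (((δ : ℝ) : 𝕜) • T) P]

end Normed

/-- Every contraction on an infinite-dimensional Banach space can be approximated in norm
by a contraction under which the orbit of a prescribed nonzero vector is linearly independent. -/
theorem stmt3 {X : Type*} [NormedAddCommGroup X] [NormedSpace ℂ X] [CompleteSpace X]
    (hX : ¬ FiniteDimensional ℂ X) (T : X →L[ℂ] X) (hT : ‖T‖ ≤ 1)
    (x : X) (hx : x ≠ 0) (ε : ℝ) (hε : 0 < ε) :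
    ∃ S : X →L[ℂ] X, ‖S‖ ≤ 1 ∧ ‖T - S‖ < ε ∧
      LinearIndependent ℂ (fun n : ℕ => (S ^ n) x) := by
  obtain ⟨B, hB⟩ := exists_linearIndependent_pow_apply hX hx
  set δ := min (ε / 3) 1
  have hδ : 0 < δ := lt_min (by positivity) one_pos
  set A := ((1 - δ : ℝ) : ℂ) • T
  have hbad : {t : ℝ | ¬ LinearIndependent ℂ fun n => ((A + (t : ℂ) • B) ^ n) x}.Countable := by
    have := countable_setOf_not_linearIndependent_pow_add_smul (A : X →ₗ[ℂ] X) B x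
      (by simpa only [← ContinuousLinearMap.toLinearMap_pow, ContinuousLinearMap.coe_coe]
        using hB)
    simpa only [Set.preimage_ofPred_eq, ← ContinuousLinearMap.toLinearMap_smul,
      ← ContinuousLinearMap.toLinearMap_add, ← ContinuousLinearMap.toLinearMap_pow,
      ContinuousLinearMap.coe_coe] using this.preimage Complex.ofReal_injective
  obtain ⟨t, ht, ht0, htδ⟩ := (hbad.dense_compl ℝ).exists_between
    (show 0 < δ / (‖B‖ + 1) by positivity)
  have htB : ‖(t : ℂ) • B‖ ≤ δ := by
    rw [norm_smul, Complex.norm_real, Real.norm_of_nonneg ht0.le]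
    calc t * ‖B‖ ≤ t * (‖B‖ + 1) := by gcongr; linarith
      _ ≤ δ := ((le_div_iff₀ (by positivity)).1 htδ.le)
  obtain ⟨hS, hTS⟩ := norm_ofReal_one_sub_smul_add_le_one (𝕜 := ℂ) hT hδ.le (min_le_right _ _) htB
  exact ⟨A + (t : ℂ) • B, hS, hTS.trans_lt (by linarith [min_le_left (ε / 3) 1]), not_not.1 ht⟩
end

section
/- Let X be a finite-dimensional Banach space and x ∈ X a nonzero vector. Then the set of bounded linear operators T on X for which x is a cyclic vector (i.e., span{x, Tx, T²x, …} = X) is open and dense in L(X) with the operator-norm topology. -/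
/-!
Fix a basis `b` of `X` and put `D T = det_b (x, T x, …, T ^ (n - 1) x)` with `n = dim X`.
By Cayley–Hamilton every `T ^ k x` lies in the span of the first `n` iterates, so `x` is cyclic
for `T` exactly when `D T ≠ 0`. The function `D` is a polynomial in the entries of `T`, hence
analytic on the connected space `L(X)`: its non-vanishing set is open, and it is dense by the
identity theorem because `D` does not vanish at a cyclic shift of a basis starting at `x`.
-/

open Module Polynomial Submodule Set Filter Topology

section Cyclic

variable {K V : Type*} [Field K] [AddCommGroup V] [Module K V]

theorem Module.End.aeval_apply_mem_span_pow_of_degree_lt (f : Module.End K V) (x : V)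
    {p : K[X]} {N : ℕ} (hp : p.degree < N) :
    aeval f p x ∈ span K (range fun i : Fin N => (f ^ (i : ℕ)) x) := by
  rcases eq_or_ne p 0 with rfl | hp0
  · simp
  rw [aeval_eq_sum_range' ((natDegree_lt_iff_degree_lt hp0).2 hp), LinearMap.sum_apply]
  refine sum_mem fun i hi => ?_
  rw [LinearMap.smul_apply]
  exact smul_mem _ _ (subset_span ⟨⟨i, Finset.mem_range.1 hi⟩, rfl⟩)

theorem Module.End.span_range_pow_apply_fin_finrank [FiniteDimensional K V]
    (f : Module.End K V) (x : V) :
    span K (range fun i : Fin (finrank K V) => (f ^ (i : ℕ)) x) =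
      span K (range fun n : ℕ => (f ^ n) x) := by
  refine le_antisymm (span_mono <| range_subset_iff.2 fun i => ⟨i, rfl⟩) (span_le.2 ?_)
  rintro _ ⟨n, rfl⟩
  dsimp only
  have hmod : (f ^ n) x = aeval f (X ^ n %ₘ f.charpoly) x := by
    rw [aeval_modByMonic_eq_self_of_root f.aeval_self_charpoly, aeval_X_pow]
  rw [hmod]
  refine f.aeval_apply_mem_span_pow_of_degree_lt x ?_
  rw [← f.charpoly_natDegree, ← degree_eq_natDegree f.charpoly_monic.ne_zero]
  exact degree_modByMonic_lt _ f.charpoly_monic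

theorem Module.End.span_range_pow_apply_eq_top_iff_det_ne_zero [FiniteDimensional K V]
    (b : Basis (Fin (finrank K V)) K V) (f : Module.End K V) (x : V) :
    span K (range fun n : ℕ => (f ^ n) x) = ⊤ ↔
      b.det (fun i : Fin (finrank K V) => (f ^ (i : ℕ)) x) ≠ 0 := by
  rw [← f.span_range_pow_apply_fin_finrank, ← isUnit_iff_ne_zero, ← b.is_basis_iff_det]
  exact ⟨fun h => ⟨linearIndependent_of_top_le_span_of_card_eq_finrank h.ge (by simp), h⟩,
    And.right⟩

open Fin.NatCast in
theorem Module.Basis.span_range_pow_constr_succ_apply {m : ℕ} [NeZero m] (b : Basis (Fin m) K V)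
    (j : Fin m) :
    span K (range fun n : ℕ => (b.constr K (fun i => b (i + 1)) ^ n) (b j)) = ⊤ := by
  set f := b.constr K fun i => b (i + 1)
  have hpow : ∀ n : ℕ, (f ^ n) (b j) = b (j + (n : Fin m)) := by
    intro n
    induction n with
    | zero => simp
    | succ n ih =>
      rw [pow_succ', Module.End.mul_apply, ih, b.constr_basis, Nat.cast_succ, add_assoc]
  rw [eq_top_iff, ← b.span_eq]
  refine span_mono (range_subset_iff.2 fun i => ⟨((i - j : Fin m) : ℕ), ?_⟩)
  simp [hpow]

theorem Module.End.exists_span_range_pow_apply_eq_top [FiniteDimensional K V] {x : V}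
    (hx : x ≠ 0) : ∃ f : Module.End K V, span K (range fun n : ℕ => (f ^ n) x) = ⊤ := by
  have hs : LinearIndepOn K id ({x} : Set V) := LinearIndepOn.singleton (by simpa using hx)
  let b := Basis.extend hs
  have hxs : x ∈ hs.extend (subset_univ _) := hs.subset_extend _ rfl
  let e := Finite.equivFin (hs.extend (subset_univ _))
  have : NeZero (Nat.card (hs.extend (subset_univ _))) :=
    ⟨Nat.card_ne_zero.2 ⟨⟨⟨x, hxs⟩⟩, inferInstance⟩⟩
  have := (b.reindex e).span_range_pow_constr_succ_apply (e ⟨x, hxs⟩)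
  rw [Basis.reindex_apply, e.symm_apply_apply, Basis.extend_apply_self] at this
  exact ⟨_, this⟩

end Cyclic

section Analytic

variable {𝕜 E F : Type*} [NontriviallyNormedField 𝕜] [NormedAddCommGroup E] [NormedSpace 𝕜 E]
  [NormedAddCommGroup F] [NormedSpace 𝕜 F]

theorem AnalyticAt.matrix_det {A ι : Type*} [NormedCommRing A] [NormedAlgebra 𝕜 A] [Fintype ι]
    [DecidableEq ι] {M : E → Matrix ι ι A} {y : E}
    (hM : ∀ i j, AnalyticAt 𝕜 (fun z => M z i j) y) : AnalyticAt 𝕜 (fun z => (M z).det) y := by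
  simp only [Matrix.det_apply']
  refine Finset.analyticAt_fun_sum _ fun σ _ => ?_
  exact analyticAt_const.mul (Finset.analyticAt_fun_prod _ fun i _ => hM (σ i) i)

theorem AnalyticAt.basis_det [CompleteSpace 𝕜] [FiniteDimensional 𝕜 F] {ι : Type*} [Fintype ι]
    [DecidableEq ι] (b : Basis ι 𝕜 F) {g : E → ι → F} {y : E}
    (hg : ∀ i, AnalyticAt 𝕜 (fun z => g z i) y) : AnalyticAt 𝕜 (fun z => b.det (g z)) y := by
  simp only [Basis.det_apply]
  refine AnalyticAt.matrix_det fun i j => ?_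
  simp only [Basis.toMatrix_apply]
  exact (LinearMap.toContinuousLinearMap (b.coord i)).analyticAt _ |>.comp (hg j)

theorem AnalyticOnNhd.dense_setOf_ne_zero [PreconnectedSpace E] {f : E → F}
    (hf : AnalyticOnNhd 𝕜 f univ) {y : E} (hy : f y ≠ 0) : Dense {z | f z ≠ 0} := by
  change Dense {z | f z = 0}ᶜ
  rw [← interior_eq_empty_iff_dense_compl, eq_empty_iff_forall_notMem]
  intro z hz
  have hfz : f =ᶠ[𝓝 z] 0 := by
    filter_upwards [mem_interior_iff_mem_nhds.1 hz] with w hw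
    exact hw
  exact hy (congrFun (hf.eq_of_eventuallyEq analyticOnNhd_const hfz) y)

end Analytic

/-- On a finite-dimensional Banach space, the set of operators for which a fixed nonzero
vector `x` is cyclic is open and dense in the operator-norm topology. -/
theorem stmt4 {X : Type*} [NormedAddCommGroup X] [NormedSpace ℂ X] [FiniteDimensional ℂ X]
    (x : X) (hx : x ≠ 0) :
    IsOpen {T : X →L[ℂ] X | Submodule.span ℂ (Set.range fun n : ℕ => (T ^ n) x) = ⊤} ∧
    Dense {T : X →L[ℂ] X | Submodule.span ℂ (Set.range fun n : ℕ => (T ^ n) x) = ⊤} := by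
  let b := finBasis ℂ X
  let D : (X →L[ℂ] X) → ℂ := fun T => b.det fun i => (T ^ (i : ℕ)) x
  have hcyclic (T : X →L[ℂ] X) : span ℂ (range fun n : ℕ => (T ^ n) x) = ⊤ ↔ D T ≠ 0 := by
    simpa only [← ContinuousLinearMap.toLinearMap_pow, ContinuousLinearMap.coe_coe] using
      Module.End.span_range_pow_apply_eq_top_iff_det_ne_zero b (T : Module.End ℂ X) x
  have hD : AnalyticOnNhd ℂ D univ := fun T _ =>
    AnalyticAt.basis_det b fun i =>
      ((ContinuousLinearMap.apply ℂ X x).analyticAt _).comp (analyticAt_id.pow _)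
  obtain ⟨S, hS⟩ := Module.End.exists_span_range_pow_apply_eq_top (K := ℂ) hx
  have hDS : D (LinearMap.toContinuousLinearMap S) ≠ 0 := by
    rw [← hcyclic]
    simpa only [← ContinuousLinearMap.coe_coe, ContinuousLinearMap.toLinearMap_pow,
      LinearMap.coe_toContinuousLinearMap] using hS
  simp only [hcyclic]
  exact ⟨isOpen_ne_fun hD.continuous continuous_const, hD.dense_setOf_ne_zero hDS⟩
end

section
/- Let H be a separable infinite-dimensional complex Hilbert space and U a unitary operator on H admitting an orthonormal basis (e_i)_{i∈ℕ} of eigenvectors with pairwise distinct eigenvalues. Then U is cyclic, i.e., there exists y ∈ H with span{y, Uy, U²y, …} dense in H. -/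
/-!
Take `y = ∑ ε j • b j` with positive weights `ε j`. For `k ≤ N`, let `L` be the Lagrange basis
polynomial of the nodes `lam 0, …, lam N` that is `1` at `lam k`; then `p = L / ε k` makes
`p(U) y` agree with `b k` in the coordinates `0, …, N`, and its remaining coordinates are
`ε j * L(lam j) / ε k`. Since the eigenvalues lie in the disc of radius `‖U‖`, `|L|` is bounded
there by a constant `C N`, and choosing `ε j` small against every `C N` with `N < j` makes
`‖p(U) y - b k‖ = O(2⁻ᴺ)`. Hence every `b k` lies in the closure of the span of the orbit of `y`.
-/

open Polynomial Finset
open scoped lp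

theorem Lagrange.norm_eval_basis_le {𝕜 ι : Type*} [NormedField 𝕜] [DecidableEq ι]
    {s : Finset ι} {v : ι → 𝕜} {R : ℝ} (hv : ∀ i ∈ s, ‖v i‖ ≤ R) {z : 𝕜} (hz : ‖z‖ ≤ R)
    (k : ι) : ‖(Lagrange.basis s v k).eval z‖ ≤ ∏ i ∈ s.erase k, 2 * R / ‖v k - v i‖ := by
  rw [Lagrange.basis, eval_prod, norm_prod]
  refine prod_le_prod (fun _ _ => norm_nonneg _) fun i hi => ?_
  rw [Lagrange.basisDivisor, eval_mul, eval_C, eval_sub, eval_X, eval_C, norm_mul, norm_inv,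
    inv_mul_eq_div]
  gcongr
  calc ‖z - v i‖ ≤ ‖z‖ + ‖v i‖ := norm_sub_le _ _
    _ ≤ 2 * R := by linarith [hv i (mem_of_mem_erase hi)]

noncomputable def lagrangeBound (lam : ℕ → ℂ) (R : ℝ) (N : ℕ) : ℝ :=
  ∑ k ∈ range (N + 1), ∏ i ∈ (range (N + 1)).erase k, 2 * R / ‖lam k - lam i‖

theorem norm_eval_lagrange_basis_le_lagrangeBound {lam : ℕ → ℂ} {R : ℝ}
    (hR : ∀ i, ‖lam i‖ ≤ R) {k N : ℕ} (hkN : k ≤ N) {z : ℂ} (hz : ‖z‖ ≤ R) :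
    ‖(Lagrange.basis (range (N + 1)) lam k).eval z‖ ≤ lagrangeBound lam R N := by
  have hR0 : 0 ≤ R := (norm_nonneg _).trans (hR 0)
  refine (Lagrange.norm_eval_basis_le (fun i _ => hR i) hz k).trans ?_
  exact single_le_sum (f := fun k => ∏ i ∈ (range (N + 1)).erase k, 2 * R / ‖lam k - lam i‖)
    (fun _ _ => prod_nonneg fun _ _ => by positivity) (mem_range.2 (Nat.lt_succ_of_le hkN))

noncomputable def decayWeight (C : ℕ → ℝ) (j : ℕ) : ℝ :=
  4⁻¹ ^ j / (1 + ∑ N ∈ range j, |C N|)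

section decayWeight

variable (C : ℕ → ℝ)

theorem one_le_one_add_sum_abs (j : ℕ) : 1 ≤ 1 + ∑ N ∈ range j, |C N| :=
  le_add_of_nonneg_right (sum_nonneg fun _ _ => abs_nonneg _)

theorem decayWeight_pos (j : ℕ) : 0 < decayWeight C j :=
  div_pos (by positivity) (one_pos.trans_le (one_le_one_add_sum_abs C j))

theorem decayWeight_le (j : ℕ) : decayWeight C j ≤ 4⁻¹ ^ j :=
  div_le_self (by positivity) (one_le_one_add_sum_abs C j)

theorem decayWeight_mul_le {N j : ℕ} (hNj : N < j) : decayWeight C j * C N ≤ 4⁻¹ ^ j := by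
  have hC : C N ≤ 1 + ∑ N ∈ range j, |C N| :=
    (le_abs_self _).trans <| (single_le_sum (f := fun N => |C N|) (fun _ _ => abs_nonneg _)
      (mem_range.2 hNj)).trans (le_add_of_nonneg_left zero_le_one)
  rw [decayWeight, div_mul_eq_mul_div,
    div_le_iff₀ (one_pos.trans_le (one_le_one_add_sum_abs C j))]
  gcongr

end decayWeight

theorem decayWeight_mul_norm_eval_lagrange_basis_le {lam : ℕ → ℂ} {R : ℝ}
    (hR : ∀ i, ‖lam i‖ ≤ R) {k N j : ℕ} (hkN : k ≤ N) (hNj : N < j) :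
    decayWeight (lagrangeBound lam R) j * ‖(Lagrange.basis (range (N + 1)) lam k).eval (lam j)‖
      ≤ 2⁻¹ ^ N * 2⁻¹ ^ j := by
  have hεj := decayWeight_pos (lagrangeBound lam R) j
  calc _ ≤ decayWeight (lagrangeBound lam R) j * lagrangeBound lam R N := by
        gcongr
        exact norm_eval_lagrange_basis_le_lagrangeBound hR hkN (hR j)
    _ ≤ 4⁻¹ ^ j := decayWeight_mul_le _ hNj
    _ = 2⁻¹ ^ j * 2⁻¹ ^ j := by rw [← mul_pow]; norm_num
    _ ≤ 2⁻¹ ^ N * 2⁻¹ ^ j := by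
        gcongr ?_ * _
        exact pow_le_pow_of_le_one (by norm_num) (by norm_num) hNj.le

theorem memℓp_two_of_norm_le_pow {E : ℕ → Type*} [∀ i, NormedAddCommGroup (E i)]
    {f : ∀ i, E i} {r : ℝ} (hr0 : 0 ≤ r) (hr1 : r < 1) (h : ∀ i, ‖f i‖ ≤ r ^ i) :
    Memℓp f 2 := by
  refine Memℓp.of_exponent_ge (q := 1) (memℓp_gen ?_) one_le_two
  simp only [ENNReal.toReal_one, Real.rpow_one]
  exact (summable_geometric_of_lt_one hr0 hr1).of_nonneg_of_le (fun _ => norm_nonneg _) h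

noncomputable def halfPowers : ℓ²(ℕ, ℝ) :=
  ⟨fun j => 2⁻¹ ^ j, memℓp_two_of_norm_le_pow (r := 2⁻¹) (by norm_num) (by norm_num)
    fun j => by simp⟩

namespace ContinuousLinearMap

variable {𝕜 E : Type*} [NontriviallyNormedField 𝕜] [NormedAddCommGroup E] [NormedSpace 𝕜 E]

theorem aeval_apply_of_apply_eq_smul (U : E →L[𝕜] E) {μ : 𝕜} {x : E} (hx : U x = μ • x)
    (p : 𝕜[X]) : aeval U p x = p.eval μ • x := by
  induction p using Polynomial.induction_on with
  | C a => simp [Algebra.algebraMap_eq_smul_one]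
  | add p q hp hq => simp [hp, hq, add_smul]
  | monomial n a hn =>
    rw [pow_succ, ← mul_assoc, map_mul, aeval_X, mul_apply_eq_comp, hx, map_smul, hn, smul_smul,
      eval_mul_X, mul_comm]

theorem aeval_apply_mem_span_pow_apply (U : E →L[𝕜] E) (p : 𝕜[X]) (y : E) :
    aeval U p y ∈ Submodule.span 𝕜 (Set.range fun n : ℕ => (U ^ n) y) := by
  rw [aeval_eq_sum_range, _root_.sum_apply]
  exact Submodule.sum_mem _ fun n _ => Submodule.smul_mem _ _ (Submodule.subset_span ⟨n, rfl⟩)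

theorem hasSum_aeval_apply {ι : Type*} (U : E →L[𝕜] E) {v : ι → E} {lam c : ι → 𝕜}
    (heig : ∀ i, U (v i) = lam i • v i) {y : E} (hy : HasSum (fun i => c i • v i) y)
    (p : 𝕜[X]) : HasSum (fun i => (c i * p.eval (lam i)) • v i) (aeval U p y) := by
  convert (aeval U p).hasSum hy using 2 with i
  rw [map_smul, U.aeval_apply_of_apply_eq_smul (heig i), smul_smul]

theorem norm_le_opNorm_of_apply_eq_smul (U : E →L[𝕜] E) {μ : 𝕜} {x : E} (hx : x ≠ 0)
    (h : U x = μ • x) : ‖μ‖ ≤ ‖U‖ := by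
  refine le_of_mul_le_mul_right ?_ (norm_pos_iff.2 hx)
  rw [← norm_smul, ← h]
  exact U.le_opNorm x

end ContinuousLinearMap

namespace HilbertBasis

variable {ι 𝕜 E : Type*} [RCLike 𝕜] [NormedAddCommGroup E] [InnerProductSpace 𝕜 E]
  (b : HilbertBasis ι 𝕜 E)

theorem repr_apply_of_hasSum {c : ι → 𝕜} {x : E} (hx : HasSum (fun i => c i • b i) x)
    (j : ι) : b.repr x j = c j := by
  classical
  rw [b.repr_apply_apply]
  refine ((innerSL 𝕜 (b j)).hasSum hx).unique ?_
  convert hasSum_ite_eq j (c j) using 2 with i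
  rw [innerSL_apply_apply, inner_smul_right, orthonormal_iff_ite.mp b.orthonormal j i]
  split_ifs with h₁ h₂ <;> simp_all [eq_comm]

theorem norm_le_of_norm_repr_le {x : E} (g : ℓ²(ι, ℝ)) (h : ∀ i, ‖b.repr x i‖ ≤ g i) :
    ‖x‖ ≤ ‖g‖ := by
  rw [← b.repr.norm_map]
  exact lp.norm_mono two_ne_zero fun i => (h i).trans (le_abs_self _)

theorem dense_of_forall_mem_closure {S : Submodule 𝕜 E} (h : ∀ i, b i ∈ closure (S : Set E)) :
    Dense (S : Set E) := by
  rw [Submodule.dense_iff_topologicalClosure_eq_top, eq_top_iff, ← b.dense_span]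
  refine Submodule.topologicalClosure_minimal _ ?_ S.isClosed_topologicalClosure
  rw [Submodule.span_le, Set.range_subset_iff]
  simpa [Submodule.topologicalClosure_coe] using h

end HilbertBasis

section Diagonal

variable {H : Type*} [NormedAddCommGroup H] [InnerProductSpace ℂ H] (b : HilbertBasis ℕ ℂ H)
  {U : H →L[ℂ] H} {lam : ℕ → ℂ} {R : ℝ} {y : H}

theorem exists_mem_span_pow_apply_norm_sub_le (heig : ∀ i, U (b i) = lam i • b i)
    (hinj : Function.Injective lam) (hR : ∀ i, ‖lam i‖ ≤ R)
    (hy : HasSum (fun j => (decayWeight (lagrangeBound lam R) j : ℂ) • b j) y) {k N : ℕ}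
    (hkN : k ≤ N) :
    ∃ w ∈ Submodule.span ℂ (Set.range fun n : ℕ => (U ^ n) y),
      ‖w - b k‖ ≤ 2⁻¹ ^ N / decayWeight (lagrangeBound lam R) k * ‖halfPowers‖ := by
  set ε := decayWeight (lagrangeBound lam R)
  set L := Lagrange.basis (range (N + 1)) lam k
  have hεk := decayWeight_pos (lagrangeBound lam R) k
  refine ⟨aeval U (C ((ε k : ℂ)⁻¹) * L) y, U.aeval_apply_mem_span_pow_apply _ _, ?_⟩
  have hcoord (j : ℕ) : b.repr (aeval U (C ((ε k : ℂ)⁻¹) * L) y - b k) j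
      = ε j * ((ε k : ℂ)⁻¹ * L.eval (lam j)) - if j = k then 1 else 0 := by
    rw [map_sub, lp.coeFn_sub, Pi.sub_apply,
      b.repr_apply_of_hasSum (U.hasSum_aeval_apply heig hy _), eval_mul, eval_C,
      b.repr_apply_apply, orthonormal_iff_ite.mp b.orthonormal]
  have hc : 0 ≤ 2⁻¹ ^ N / ε k := by positivity
  rw [← Real.norm_of_nonneg hc, ← lp.norm_const_smul two_ne_zero]
  refine b.norm_le_of_norm_repr_le _ fun j => ?_
  rw [hcoord, lp.coeFn_smul, Pi.smul_apply, smul_eq_mul]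
  change _ ≤ 2⁻¹ ^ N / ε k * 2⁻¹ ^ j
  rcases le_or_gt j N with hjN | hNj
  · have hj : j ∈ range (N + 1) := mem_range.2 (Nat.lt_succ_of_le hjN)
    rcases eq_or_ne j k with rfl | hjk
    · rw [Lagrange.eval_basis_self hinj.injOn hj, mul_one, if_pos rfl,
        mul_inv_cancel₀ (by exact_mod_cast hεk.ne'), sub_self, norm_zero]
      positivity
    · rw [Lagrange.eval_basis_of_ne hjk.symm hj, mul_zero, mul_zero, if_neg hjk, sub_zero,
        norm_zero]
      positivity
  · rw [if_neg (by omega), sub_zero, norm_mul, norm_mul, norm_inv,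
      Complex.norm_of_nonneg (decayWeight_pos _ j).le, Complex.norm_of_nonneg hεk.le]
    calc ε j * ((ε k)⁻¹ * ‖L.eval (lam j)‖) = ε j * ‖L.eval (lam j)‖ / ε k := by ring
      _ ≤ 2⁻¹ ^ N * 2⁻¹ ^ j / ε k := by
        gcongr ?_ / _
        exact decayWeight_mul_norm_eval_lagrange_basis_le hR hkN hNj
      _ = 2⁻¹ ^ N / ε k * 2⁻¹ ^ j := by ring

theorem mem_closure_span_pow_apply (heig : ∀ i, U (b i) = lam i • b i)
    (hinj : Function.Injective lam) (hR : ∀ i, ‖lam i‖ ≤ R)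
    (hy : HasSum (fun j => (decayWeight (lagrangeBound lam R) j : ℂ) • b j) y) (k : ℕ) :
    b k ∈ closure (Submodule.span ℂ (Set.range fun n : ℕ => (U ^ n) y) : Set H) := by
  have hlim : Filter.Tendsto
      (fun N : ℕ => 2⁻¹ ^ N / decayWeight (lagrangeBound lam R) k * ‖halfPowers‖)
      Filter.atTop (nhds 0) := by
    simpa using ((tendsto_pow_atTop_nhds_zero_of_lt_one (r := (2⁻¹ : ℝ)) (by norm_num)
      (by norm_num)).div_const _).mul_const _
  rw [Metric.mem_closure_iff]
  intro δ hδ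
  obtain ⟨N, hNδ, hkN⟩ :=
    ((hlim.eventually (gt_mem_nhds hδ)).and (Filter.eventually_ge_atTop k)).exists
  obtain ⟨w, hw, hwk⟩ := exists_mem_span_pow_apply_norm_sub_le b heig hinj hR hy hkN
  exact ⟨w, hw, by rw [dist_eq_norm']; exact hwk.trans_lt hNδ⟩

end Diagonal

theorem stmt8_general {H : Type*} [NormedAddCommGroup H] [InnerProductSpace ℂ H]
    (b : HilbertBasis ℕ ℂ H) (U : H →L[ℂ] H)
    (lam : ℕ → ℂ) (heig : ∀ i, U (b i) = lam i • b i) (hinj : Function.Injective lam) :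
    ∃ y : H, Dense
      ((Submodule.span ℂ (Set.range fun n : ℕ => (U ^ n) y) : Submodule ℂ H) : Set H) := by
  have hR (i : ℕ) : ‖lam i‖ ≤ ‖U‖ :=
    U.norm_le_opNorm_of_apply_eq_smul (b.orthonormal.ne_zero i) (heig i)
  set ε := decayWeight (lagrangeBound lam ‖U‖)
  have hε : Memℓp (fun j => (ε j : ℂ)) 2 :=
    memℓp_two_of_norm_le_pow (r := 4⁻¹) (by norm_num) (by norm_num) fun j => by
      rw [Complex.norm_of_nonneg (decayWeight_pos _ j).le]
      exact decayWeight_le _ j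
  let e : ℓ²(ℕ, ℂ) := ⟨_, hε⟩
  have hy : HasSum (fun j => (ε j : ℂ) • b j) (b.repr.symm e) := b.hasSum_repr_symm e
  exact ⟨b.repr.symm e,
    b.dense_of_forall_mem_closure (mem_closure_span_pow_apply b heig hinj hR hy)⟩

/-- A unitary operator on a separable infinite-dimensional complex Hilbert space admitting an
orthonormal (Hilbert) basis of eigenvectors with pairwise distinct eigenvalues is cyclic. -/
theorem stmt8 {H : Type*} [NormedAddCommGroup H] [InnerProductSpace ℂ H] [CompleteSpace H]
    (hinf : ¬ FiniteDimensional ℂ H)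
    (b : HilbertBasis ℕ ℂ H) (U : H →L[ℂ] H) (hU : U ∈ unitary (H →L[ℂ] H))
    (lam : ℕ → ℂ) (heig : ∀ i, U (b i) = lam i • b i) (hinj : Function.Injective lam) :
    ∃ y : H, Dense
      ((Submodule.span ℂ (Set.range fun n : ℕ => (U ^ n) y) : Submodule ℂ H) : Set H) :=
  stmt8_general b U lam heig hinj
end
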